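/- arXiv:1712.04130 — 8 statements merged into one kernel-verified Lean document; each statement's English description precedes it below -/
import Mathlib

section
/- Let R be a relation on X × Y and η ⊆ Y. Then (φ_R ∘ ψ_R)(χ) = χ holds for every proper subset χ of η if and only if (φ_R ∘ ψ_R)(γ) = γ holds for all γ of the form γ = η \ {y} with y ∈ η. -/
def psiR {X Y : Type*} (R : Set (X × Y)) (γ : Set Y) : Set X := {x | ∀ y ∈ γ, (x, y) ∈ R}

def phiR {X Y : Type*} (R : Set (X × Y)) (σ : Set X) : Set Y := {y | ∀ x ∈ σ, (x, y) ∈ R}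

/-! The closure `χ ↦ φ_R (ψ_R χ)` comes from an antitone Galois connection. If `χ ⊂ η`,
pick `y₀ ∈ η \ χ`; for every `y ∈ η \ χ` we have `χ ⊆ η \ {y}`, so the closure of `χ` lies
in the closed set `η \ {y}`. Taking `y = y₀` puts the closure inside `η`, and then any `z` of
the closure outside `χ` would lie in `η \ {z}`. -/

open Set OrderDual

theorem psiR_phiR_galoisConnection {X Y : Type*} (R : Set (X × Y)) :
    GaloisConnection (toDual ∘ psiR R) (phiR R ∘ ofDual) :=
  fun _ _ => ⟨fun h _ hy _ hx => h hx _ hy, fun h _ hx _ hy => h hy _ hx⟩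

theorem ClosureOperator.isClosed_of_ssubset {α : Type*} {c : ClosureOperator (Set α)}
    {η χ : Set α} (h : ∀ y ∈ η, c.IsClosed (η \ {y})) (hχ : χ ⊂ η) : c.IsClosed χ := by
  have closure_subset : ∀ y ∈ η, y ∉ χ → c χ ⊆ η \ {y} := fun y hy hyχ =>
    c.closure_min (subset_sdiff_singleton hχ.subset hyχ) (h y hy)
  obtain ⟨y₀, hy₀η, hy₀χ⟩ := exists_of_ssubset hχ
  refine c.isClosed_iff_closure_le.2 fun z hz => ?_
  have hzη : z ∈ η := (closure_subset y₀ hy₀η hy₀χ hz).1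
  by_contra hzχ
  exact (closure_subset z hzη hzχ hz).2 rfl

theorem proper_subsets_fixed_iff_general {X Y : Type*}
    (R : Set (X × Y)) (η : Set Y) :
    (∀ χ : Set Y, χ ⊂ η → phiR R (psiR R χ) = χ) ↔
    (∀ y ∈ η, phiR R (psiR R (η \ {y})) = η \ {y}) := by
  let c := (psiR_phiR_galoisConnection R).closureOperator
  refine ⟨fun h y hy => h _ (sdiff_singleton_ssubset.2 hy), fun h χ hχ => ?_⟩
  exact (ClosureOperator.isClosed_of_ssubset (c := c)
    (fun y hy => c.isClosed_iff.2 (h y hy)) hχ).closure_eq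

/-- Closure fixes every proper subset of η iff it fixes every set of the form η \ {y}, y ∈ η. -/
theorem proper_subsets_fixed_iff {X Y : Type*} [Fintype X] [Fintype Y]
    (R : Set (X × Y)) (η : Set Y) :
    (∀ χ : Set Y, χ ⊂ η → phiR R (psiR R χ) = χ) ↔
    (∀ y ∈ η, phiR R (psiR R (η \ {y})) = η \ {y}) :=
  proper_subsets_fixed_iff_general R η
end

section
/- Let R be a tight relation (no blank rows or columns) on nonempty finite sets X and Y. Then R is connected as a bipartite graph on X and Y if and only if the Dowker complex Ψ_R is path-connected (any two vertices of Ψ_R are joined by a sequence of edges of Ψ_R). -/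
/-- Adjacency of the bipartite graph on X ⊔ Y determined by the relation R. -/
def bipAdj {X Y : Type*} (R : Set (X × Y)) (a b : X ⊕ Y) : Prop :=
  (∃ x y, a = Sum.inl x ∧ b = Sum.inr y ∧ (x, y) ∈ R) ∨
  (∃ x y, a = Sum.inr y ∧ b = Sum.inl x ∧ (x, y) ∈ R)

/-! A bipartite path `x — y — x'` is exactly an edge `{x, x'}` of `Ψ_R`. Since no column of `R`
is blank, every attribute is held by some individual: so every attribute vertex is joined to `X`,
and collapsing each attribute onto such an individual turns bipartite paths into paths of `Ψ_R`. -/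

namespace Relation

open Function Sum

variable {X Y : Type*} {R : Set (X × Y)}

/-- Adjacency in the 1-skeleton of `Ψ_R`: two individuals sharing an attribute. -/
def psiAdj (R : Set (X × Y)) (a b : X) : Prop := ∃ y : Y, (a, y) ∈ R ∧ (b, y) ∈ R

instance : Std.Symm (bipAdj R) where
  symm := by
    rintro _ _ (⟨x, y, rfl, rfl, hxy⟩ | ⟨x, y, rfl, rfl, hxy⟩)
    · exact Or.inr ⟨x, y, rfl, rfl, hxy⟩
    · exact Or.inl ⟨x, y, rfl, rfl, hxy⟩

theorem ReflTransGen.bipAdj_inl_of_psiAdj {x x' : X} (h : ReflTransGen (psiAdj R) x x') :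
    ReflTransGen (bipAdj R) (inl x) (inl x') := by
  induction h with
  | refl => exact .refl
  | tail _ hstep ih =>
    obtain ⟨y, h₁, h₂⟩ := hstep
    exact (ih.tail (Or.inl ⟨_, y, rfl, rfl, h₁⟩)).tail (Or.inr ⟨_, y, rfl, rfl, h₂⟩)

theorem ReflTransGen.psiAdj_of_bipAdj_inl (htY : ∀ y : Y, ∃ x : X, (x, y) ∈ R) {x x' : X}
    (h : ReflTransGen (bipAdj R) (inl x) (inl x')) : ReflTransGen (psiAdj R) x x' := by
  let collapse : X ⊕ Y → X := Sum.elim id fun y => (htY y).choose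
  have hstep : bipAdj R ≤ (ReflTransGen (psiAdj R) on collapse) := by
    rintro _ _ (⟨x₀, y, rfl, rfl, hR⟩ | ⟨x₀, y, rfl, rfl, hR⟩)
    · exact .single ⟨y, hR, (htY y).choose_spec⟩
    · exact .single ⟨y, (htY y).choose_spec, hR⟩
  exact ReflTransGen.lift' collapse hstep _ _ h

theorem exists_reflTransGen_bipAdj_inl (htY : ∀ y : Y, ∃ x : X, (x, y) ∈ R) (a : X ⊕ Y) :
    ∃ x : X, ReflTransGen (bipAdj R) a (inl x) := by
  cases a with
  | inl x => exact ⟨x, .refl⟩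
  | inr y =>
    obtain ⟨x, hxy⟩ := htY y
    exact ⟨x, .single (Or.inr ⟨x, y, rfl, rfl, hxy⟩)⟩

end Relation

theorem tight_connected_iff_psi_path_connected_general {X Y : Type*}
    (R : Set (X × Y))
    (htY : ∀ y : Y, ∃ x : X, (x, y) ∈ R) :
    (∀ a b : X ⊕ Y, Relation.ReflTransGen (bipAdj R) a b) ↔
    (∀ x x' : X,
      Relation.ReflTransGen (fun a b : X => ∃ y : Y, (a, y) ∈ R ∧ (b, y) ∈ R) x x') := by
  constructor
  · intro h x x'
    exact (h (.inl x) (.inl x')).psiAdj_of_bipAdj_inl htY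
  · intro h a b
    obtain ⟨x, hax⟩ := Relation.exists_reflTransGen_bipAdj_inl htY a
    obtain ⟨x', hbx'⟩ := Relation.exists_reflTransGen_bipAdj_inl htY b
    exact hax.trans ((h x x').bipAdj_inl_of_psiAdj.trans (symm hbx'))

/-- For a tight relation, connectivity of the bipartite graph is equivalent to
path-connectivity of the Dowker complex Ψ_R (vertices joined by edges,
where an edge joins two individuals sharing an attribute). -/
theorem tight_connected_iff_psi_path_connected {X Y : Type*}
    [Fintype X] [Fintype Y] [Nonempty X] [Nonempty Y] (R : Set (X × Y))
    (htX : ∀ x : X, ∃ y : Y, (x, y) ∈ R)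
    (htY : ∀ y : Y, ∃ x : X, (x, y) ∈ R) :
    (∀ a b : X ⊕ Y, Relation.ReflTransGen (bipAdj R) a b) ↔
    (∀ x x' : X,
      Relation.ReflTransGen (fun a b : X => ∃ y : Y, (a, y) ∈ R ∧ (b, y) ∈ R) x x') :=
  tight_connected_iff_psi_path_connected_general R htY
end

section
/- Let R be a relation on X × Y with X, Y nonempty. R preserves attribute privacy (i.e., (φ_R ∘ ψ_R)(γ) = γ for all γ ∈ Φ_R ∪ {∅}) if and only if for all γ ∈ Φ_R and all y ∈ Y, ψ_R(γ) ⊆ ψ_R({y}) implies y ∈ γ. -/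
/-- R preserves attribute privacy: φ_R ∘ ψ_R is the identity on Φ_R ∪ {∅}. -/
def AttrPrivacy {X Y : Type*} (R : Set (X × Y)) : Prop :=
  ∀ γ : Set Y, ((psiR R γ).Nonempty ∨ γ = ∅) → phiR R (psiR R γ) = γ

section Closure

variable {X Y : Type*} (R : Set (X × Y))

@[simp]
theorem psiR_empty : psiR R (∅ : Set Y) = Set.univ := by
  ext x
  simp [psiR]

theorem mem_phiR_psiR_iff {γ : Set Y} {y : Y} :
    y ∈ phiR R (psiR R γ) ↔ psiR R γ ⊆ psiR R {y} := by
  simp [phiR, psiR, Set.subset_def]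

theorem subset_phiR_psiR (γ : Set Y) : γ ⊆ phiR R (psiR R γ) :=
  fun y hy _ hx => hx y hy

theorem phiR_psiR_eq_iff {γ : Set Y} :
    phiR R (psiR R γ) = γ ↔ ∀ y : Y, psiR R γ ⊆ psiR R {y} → y ∈ γ := by
  simp only [← mem_phiR_psiR_iff]
  exact ⟨fun h y hy => h ▸ hy,
    fun h => (subset_phiR_psiR R γ).antisymm' fun y hy => h y hy⟩

end Closure

theorem attr_privacy_iff_columns_general {X Y : Type*}
    [Nonempty X] (R : Set (X × Y)) :
    AttrPrivacy R ↔
    ∀ γ : Set Y, (psiR R γ).Nonempty →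
      ∀ y : Y, psiR R γ ⊆ psiR R {y} → y ∈ γ := by
  simp only [← phiR_psiR_eq_iff]
  refine ⟨fun h γ hne => h γ (.inl hne), fun h γ hγ => h γ ?_⟩
  rcases hγ with hne | rfl
  · exact hne
  · simp

/-- R preserves attribute privacy iff for all simplices γ of Φ_R and all attributes y,
ψ_R(γ) ⊆ ψ_R({y}) implies y ∈ γ. -/
theorem attr_privacy_iff_columns {X Y : Type*} [Fintype X] [Fintype Y]
    [Nonempty X] [Nonempty Y] (R : Set (X × Y)) :
    AttrPrivacy R ↔
    ∀ γ : Set Y, (psiR R γ).Nonempty →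
      ∀ y : Y, psiR R γ ⊆ psiR R {y} → y ∈ γ :=
  attr_privacy_iff_columns_general R
end

section
/- Let R be a relation on nonempty finite sets X and Y. If R preserves attribute privacy and every x ∈ X is uniquely identifiable via R (i.e., ψ_R(Y_x) = {x} for all x), then Φ_R contains no free faces. -/
def rowSet {X Y : Type*} (R : Set (X × Y)) (x : X) : Set Y := {y | (x, y) ∈ R}

def dowkerPhi {X Y : Type*} (R : Set (X × Y)) : Set (Set Y) :=
  {γ | ∃ x : X, ∀ y ∈ γ, (x, y) ∈ R}

def IsMaximalSimplex {X Y : Type*} (R : Set (X × Y)) (η : Set Y) : Prop :=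
  η ∈ dowkerPhi R ∧ ∀ η' ∈ dowkerPhi R, η ⊆ η' → η' = η

def IsFreeFace {X Y : Type*} (R : Set (X × Y)) (γ : Set Y) : Prop :=
  γ ∈ dowkerPhi R ∧ ∃! η : Set Y, IsMaximalSimplex R η ∧ γ ⊂ η

/-!
Every maximal simplex of `Φ_R` is a row `Y_x`, and every row lies in a maximal simplex. If `γ` is a
free face with unique maximal coface `Y_{x₀}`, then for each `x ∈ ψ_R(γ)` the maximal simplex over
`Y_x` is a proper coface of `γ`, hence equals `Y_{x₀}`; so `x₀ ∈ ψ_R(Y_x) = {x}`. Thus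
`ψ_R(γ) = {x₀}` and `φ_R(ψ_R(γ)) = Y_{x₀} ≠ γ`, contradicting attribute privacy.
-/

section Dowker

variable {X Y : Type*} {R : Set (X × Y)}

theorem mem_psiR_iff_subset_rowSet {γ : Set Y} {x : X} : x ∈ psiR R γ ↔ γ ⊆ rowSet R x :=
  Iff.rfl

theorem phiR_singleton (x : X) : phiR R {x} = rowSet R x := by
  ext y
  simp [phiR, rowSet]

theorem rowSet_mem_dowkerPhi (x : X) : rowSet R x ∈ dowkerPhi R :=
  ⟨x, fun _ hy => hy⟩

theorem IsMaximalSimplex.exists_rowSet_eq {η : Set Y} (hη : IsMaximalSimplex R η) :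
    ∃ x, rowSet R x = η := by
  obtain ⟨⟨x, hx⟩, hmax⟩ := hη
  exact ⟨x, hmax _ (rowSet_mem_dowkerPhi x) hx⟩

theorem IsMaximalSimplex.not_ssubset {η γ : Set Y} (hη : IsMaximalSimplex R η)
    (hγ : γ ∈ dowkerPhi R) : ¬ η ⊂ γ :=
  fun h => h.ne (hη.2 γ hγ h.subset).symm

theorem exists_isMaximalSimplex_superset [Finite Y] {σ : Set Y} (hσ : σ ∈ dowkerPhi R) :
    ∃ η, IsMaximalSimplex R η ∧ σ ⊆ η := by
  obtain ⟨η, ⟨hηΦ, hση⟩, hmax⟩ :=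
    (Set.toFinite {η ∈ dowkerPhi R | σ ⊆ η}).exists_maximalFor id _ ⟨σ, hσ, subset_rfl⟩
  refine ⟨η, ⟨hηΦ, fun η' hη' hsub => ?_⟩, hση⟩
  exact (hsub.antisymm (hmax ⟨hη', hση.trans hsub⟩ hsub)).symm

theorem IsFreeFace.exists_psiR_eq_singleton [Finite Y]
    (hid : ∀ x : X, psiR R (rowSet R x) = {x}) {γ : Set Y} (hγ : IsFreeFace R γ) :
    ∃ x₀, psiR R γ = {x₀} ∧ γ ⊂ rowSet R x₀ := by
  obtain ⟨-, η, ⟨hη, hγη⟩, huniq⟩ := hγ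
  obtain ⟨x₀, rfl⟩ := hη.exists_rowSet_eq
  refine ⟨x₀, Set.eq_singleton_iff_unique_mem.mpr ⟨hγη.subset, fun x hx => ?_⟩, hγη⟩
  obtain ⟨η', hη', hrow⟩ := exists_isMaximalSimplex_superset (rowSet_mem_dowkerPhi (R := R) x)
  have hγη' : γ ⊂ η' := by
    have hγrow : γ ⊆ rowSet R x := mem_psiR_iff_subset_rowSet.mp hx
    refine (hγrow.trans hrow).ssubset_of_ne ?_
    rintro rfl
    exact hη'.not_ssubset (rowSet_mem_dowkerPhi x₀) hγη
  have hx₀ : x₀ ∈ psiR R (rowSet R x) := by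
    rw [mem_psiR_iff_subset_rowSet, ← huniq η' ⟨hη', hγη'⟩]
    exact hrow
  rw [hid x] at hx₀
  exact hx₀.symm

end Dowker

theorem privacy_and_identifiable_implies_no_free_faces_general {X Y : Type*}
    [Fintype Y] (R : Set (X × Y))
    (hpriv : AttrPrivacy R)
    (hid : ∀ x : X, psiR R (rowSet R x) = {x}) :
    ∀ γ : Set Y, ¬ IsFreeFace R γ := by
  intro γ hγ
  obtain ⟨x₀, hψ, hγx₀⟩ := hγ.exists_psiR_eq_singleton hid
  have hφψ := hpriv γ (Or.inl ⟨x₀, hψ.symm ▸ rfl⟩)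
  rw [hψ, phiR_singleton] at hφψ
  exact hγx₀.ne hφψ.symm

/-- If R preserves attribute privacy and every individual is uniquely identifiable,
then Φ_R contains no free faces. -/
theorem privacy_and_identifiable_implies_no_free_faces {X Y : Type*}
    [Fintype X] [Fintype Y] [Nonempty X] [Nonempty Y] (R : Set (X × Y))
    (hpriv : AttrPrivacy R)
    (hid : ∀ x : X, psiR R (rowSet R x) = {x}) :
    ∀ γ : Set Y, ¬ IsFreeFace R γ :=
  privacy_and_identifiable_implies_no_free_faces_general R hpriv hid
end

section
/- Let R be a relation on X × Y with |X| = |Y| = n > 1. If R has no blank columns and preserves attribute privacy, then every x ∈ X is uniquely identifiable via R, i.e., ψ_R(Y_x) = {x} for every x ∈ X. -/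
/-!
Write `F x` for the row of `x`. Privacy says that every row punctured at one of its attributes
`y` lies in a row avoiding `y`. By induction on the number `n` of attributes, a private family of
rows has at least `n` rows, with equality only for an antichain of distinct rows. For the bound,
remove an attribute `y` from every row: by induction the traces would form an antichain if there
were only `n - 1` rows, but a row through `y` is dominated by the trace of the row avoiding `y`
that privacy provides. For the equality case, a row `F x₀ ⊆ F x₁` can be deleted without losing
privacy, unless `F x₀ = F x₁ \ {y}`; then the traces at `y` of `x₀` and `x₁` coincide, and deleting
`x₁` from the traces leaves `n - 1` rows on `n - 1` attributes that do not form an antichain.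
-/

open Finset

section Rows

variable {α β : Type*}

def RowsAntichain (X : Finset α) (F : α → Finset β) : Prop :=
  ∀ x₀ ∈ X, ∀ x₁ ∈ X, F x₀ ⊆ F x₁ → x₀ = x₁

variable [DecidableEq β]

-- Row form of `AttrPrivacy`, which asks every subset of a row to be an intersection of rows.
def RowPrivacy (X : Finset α) (F : α → Finset β) : Prop :=
  ∀ x ∈ X, ∀ y ∈ F x, ∃ x' ∈ X, (F x).erase y ⊆ F x' ∧ y ∉ F x'

def PrivacyBound (α β : Type*) [DecidableEq β] (n : ℕ) : Prop :=
  ∀ (X : Finset α) (F : α → Finset β), (X.biUnion F).card = n → RowPrivacy X F →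
    n ≤ X.card ∧ (X.card = n → RowsAntichain X F)

variable {X : Finset α} {F : α → Finset β}

theorem RowPrivacy.trace (h : RowPrivacy X F) (y : β) :
    RowPrivacy X (fun x => (F x).erase y) := by
  intro x hx z hz
  obtain ⟨x', hx', hsub, hzx'⟩ := h x hx z (mem_of_mem_erase hz)
  refine ⟨x', hx', ?_, fun hz' => hzx' (mem_of_mem_erase hz')⟩
  rw [erase_right_comm]
  exact erase_subset_erase y hsub

theorem RowPrivacy.exists_erase_subset (h : RowPrivacy X F) {x : α} {y : β} (hx : x ∈ X)
    (hy : y ∈ F x) : ∃ v ∈ X, y ∉ F v ∧ (F x).erase y ⊆ (F v).erase y := by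
  obtain ⟨v, hv, hsub, hyv⟩ := h x hx y hy
  exact ⟨v, hv, hyv, by rwa [erase_eq_of_notMem hyv]⟩

theorem card_biUnion_erase {y : β} (hy : y ∈ X.biUnion F) :
    (X.biUnion fun x => (F x).erase y).card = (X.biUnion F).card - 1 := by
  rw [← erase_biUnion, card_erase_of_mem hy]

theorem card_le_of_privacyBound {n : ℕ} (ih : PrivacyBound α β n)
    (hY : (X.biUnion F).card = n + 1) (hp : RowPrivacy X F) : n + 1 ≤ X.card := by
  obtain ⟨y, hy⟩ := card_pos.mp (by omega : 0 < (X.biUnion F).card)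
  obtain ⟨hle, hanti⟩ := ih X _ (by rw [card_biUnion_erase hy, hY]; rfl) (hp.trace y)
  by_contra hlt
  obtain ⟨x, hx, hyx⟩ := mem_biUnion.mp hy
  obtain ⟨v, hv, hyv, hsub⟩ := hp.exists_erase_subset hx hyx
  exact hyv (hanti (by omega) x hx v hv hsub ▸ hyx)

variable [DecidableEq α] {x₀ x₁ : α}

theorem biUnion_erase_of_subset (hx₁ : x₁ ∈ X) (hne : x₀ ≠ x₁) (hsub : F x₀ ⊆ F x₁) :
    (X.erase x₀).biUnion F = X.biUnion F := by
  refine Subset.antisymm (biUnion_subset_biUnion_of_subset_left F (erase_subset x₀ X)) ?_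
  intro y hy
  obtain ⟨x, hx, hyx⟩ := mem_biUnion.mp hy
  by_cases hx₀ : x = x₀
  · subst hx₀
    exact mem_biUnion.mpr ⟨x₁, mem_erase.mpr ⟨hne.symm, hx₁⟩, hsub hyx⟩
  · exact mem_biUnion.mpr ⟨x, mem_erase.mpr ⟨hx₀, hx⟩, hyx⟩

theorem RowPrivacy.erase_of_subset (h : RowPrivacy X F) (hx₁ : x₁ ∈ X) (hne : x₀ ≠ x₁)
    (hsub : F x₀ ⊆ F x₁) (hgap : ∀ y ∈ F x₁, (F x₁).erase y ≠ F x₀) :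
    RowPrivacy (X.erase x₀) F := by
  intro x hx z hz
  obtain ⟨w, hw, hsubw, hzw⟩ := h x (mem_of_mem_erase hx) z hz
  by_cases hw₀ : w = x₀
  swap
  · exact ⟨w, mem_erase.mpr ⟨hw₀, hw⟩, hsubw, hzw⟩
  subst hw₀
  by_cases hz₁ : z ∈ F x₁
  swap
  · exact ⟨x₁, mem_erase.mpr ⟨hne.symm, hx₁⟩, hsubw.trans hsub, hz₁⟩
  obtain ⟨w', hw', hsubw', hzw'⟩ := h x₁ hx₁ z hz₁
  have hw'₀ : w' ≠ w := by
    rintro rfl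
    refine hgap z hz₁ (Subset.antisymm hsubw' fun a ha => ?_)
    exact mem_erase.mpr ⟨ne_of_mem_of_not_mem ha hzw', hsub ha⟩
  refine ⟨w', mem_erase.mpr ⟨hw'₀, hw'⟩, fun a ha => hsubw' ?_, hzw'⟩
  exact mem_erase.mpr ⟨ne_of_mem_erase ha, hsub (hsubw ha)⟩

theorem RowPrivacy.erase_of_eq (h : RowPrivacy X F) (hx₁ : x₁ ∈ X) (hne : x₀ ≠ x₁)
    (heq : F x₀ = F x₁) : RowPrivacy (X.erase x₀) F :=
  h.erase_of_subset hx₁ hne heq.subset fun _ hy => heq ▸ (erase_ssubset hy).ne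

theorem RowPrivacy.not_rowsAntichain_trace (h : RowPrivacy X F) (hx₀ : x₀ ∈ X) (hx₁ : x₁ ∈ X)
    (hne : x₀ ≠ x₁) {y : β} (hy₁ : y ∈ F x₁) (hF₀ : (F x₁).erase y = F x₀)
    (hnonempty : ((X.erase x₁).biUnion fun x => (F x).erase y).Nonempty) :
    ¬ RowsAntichain (X.erase x₁) fun x => (F x).erase y := by
  intro hanti
  by_cases hy_other : ∃ x ∈ X, x ≠ x₁ ∧ y ∈ F x
  · obtain ⟨x, hx, hxx₁, hyx⟩ := hy_other
    obtain ⟨v, hv, hyv, hsubv⟩ := h.exists_erase_subset hx hyx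
    have hvx₁ : v ≠ x₁ := by
      rintro rfl
      exact hyv hy₁
    exact hyv (hanti x (mem_erase.mpr ⟨hxx₁, hx⟩) v (mem_erase.mpr ⟨hvx₁, hv⟩) hsubv ▸ hyx)
  push Not at hy_other
  -- every other row avoids `y`, so privacy at `x₁` leaves no room for a second attribute
  have hF₁ : F x₁ = {y} := by
    refine eq_singleton_iff_unique_mem.mpr ⟨hy₁, fun z hz => ?_⟩
    by_contra hzy
    obtain ⟨w, hw, hsubw, hzw⟩ := h x₁ hx₁ z hz
    have hwx₁ : w = x₁ := by
      by_contra hwx₁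
      exact hy_other w hw hwx₁ (hsubw (mem_erase.mpr ⟨Ne.symm hzy, hy₁⟩))
    exact hzw (hwx₁ ▸ hz)
  have hG₀ : (F x₀).erase y = ∅ := by
    rw [← hF₀, hF₁, erase_singleton, erase_empty]
  obtain ⟨z, hz⟩ := hnonempty
  obtain ⟨x, hx, hzx⟩ := mem_biUnion.mp hz
  have hx₀x := hanti x₀ (mem_erase.mpr ⟨hne, hx₀⟩) x hx
    (show (F x₀).erase y ⊆ _ by rw [hG₀]; exact empty_subset _)
  rw [← hx₀x, hG₀] at hzx
  exact notMem_empty z hzx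

theorem rowsAntichain_of_privacyBound {n : ℕ} (ih : PrivacyBound α β n)
    (hY : (X.biUnion F).card = n + 1) (hX : X.card = n + 1) (hp : RowPrivacy X F) :
    RowsAntichain X F := by
  intro x₀ hx₀ x₁ hx₁ hsub
  by_contra hne
  by_cases hgap : ∀ y ∈ F x₁, (F x₁).erase y ≠ F x₀
  · have := card_le_of_privacyBound ih (by rwa [biUnion_erase_of_subset hx₁ hne hsub])
      (hp.erase_of_subset hx₁ hne hsub hgap)
    rw [card_erase_of_mem hx₀] at this
    omega
  push Not at hgap
  obtain ⟨y, hy₁, hF₀⟩ := hgap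
  have hG : (F x₁).erase y = (F x₀).erase y := by
    rw [hF₀, erase_eq_of_notMem (hF₀ ▸ notMem_erase y (F x₁))]
  have hGcard : ((X.erase x₁).biUnion fun x => (F x).erase y).card = n := by
    rw [biUnion_erase_of_subset (F := fun x => (F x).erase y) hx₀ (Ne.symm hne) hG.subset,
      card_biUnion_erase (mem_biUnion.mpr ⟨x₁, hx₁, hy₁⟩), hY]
    rfl
  have hn : 0 < n := by
    have := one_lt_card.mpr ⟨x₀, hx₀, x₁, hx₁, hne⟩
    omega
  refine hp.not_rowsAntichain_trace hx₀ hx₁ hne hy₁ hF₀ (card_pos.mp (hGcard ▸ hn)) ?_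
  exact (ih _ _ hGcard ((hp.trace y).erase_of_eq hx₀ (Ne.symm hne) hG)).2
    (by rw [card_erase_of_mem hx₁, hX]; rfl)

theorem privacyBound : ∀ n, PrivacyBound α β n
  | 0 => fun _ _ _ _ =>
    ⟨Nat.zero_le _, fun hX x₀ hx₀ => absurd hx₀ (by simp [card_eq_zero.mp hX])⟩
  | n + 1 => fun _ _ hY hp =>
    ⟨card_le_of_privacyBound (privacyBound n) hY hp,
      fun hX => rowsAntichain_of_privacyBound (privacyBound n) hY hX hp⟩

end Rows

theorem RowPrivacy.of_attrPrivacy {α β : Type*} [Fintype α] [DecidableEq β] {R : Set (α × β)}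
    (h : AttrPrivacy R) {F : α → Finset β} (hF : ∀ x y, y ∈ F x ↔ (x, y) ∈ R) :
    RowPrivacy univ F := by
  intro x _ y hy
  have hclosed := h (rowSet R x \ {y}) (Or.inl ⟨x, fun z hz => hz.1⟩)
  have hy' : y ∉ phiR R (psiR R (rowSet R x \ {y})) := by
    rw [hclosed]
    exact fun hy' => hy'.2 rfl
  simp only [phiR, Set.mem_ofPred_eq, not_forall] at hy'
  obtain ⟨x', hx', hyx'⟩ := hy'
  refine ⟨x', mem_univ x', fun z hz => ?_, fun hyx'' => hyx' ((hF x' y).mp hyx'')⟩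
  obtain ⟨hzy, hzx⟩ := mem_erase.mp hz
  exact (hF x' z).mpr (hx' z ⟨(hF x z).mp hzx, hzy⟩)

theorem square_privacy_implies_identifiable_general {X Y : Type*} [Fintype X] [Fintype Y]
    (R : Set (X × Y))
    (hcard : Fintype.card X = Fintype.card Y)
    (hcol : ∀ y : Y, ∃ x : X, (x, y) ∈ R)
    (hpriv : AttrPrivacy R) :
    ∀ x : X, psiR R (rowSet R x) = {x} := by
  classical
  set F : X → Finset Y := fun x => univ.filter fun y => (x, y) ∈ R
  have hF : ∀ x y, y ∈ F x ↔ (x, y) ∈ R := fun x y => by simp [F]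
  have hcover : univ.biUnion F = univ := eq_univ_of_forall fun y =>
    mem_biUnion.mpr ((hcol y).imp fun x hx => ⟨mem_univ x, (hF x y).mpr hx⟩)
  have hanti : RowsAntichain univ F :=
    (privacyBound (Fintype.card Y) univ F (by rw [hcover, card_univ])
      (RowPrivacy.of_attrPrivacy hpriv hF)).2 (by rw [card_univ, hcard])
  refine fun x => Set.eq_singleton_iff_unique_mem.mpr ⟨fun _ hy => hy, fun x' hx' => ?_⟩
  refine (hanti x (mem_univ x) x' (mem_univ x') fun y hy => ?_).symm
  exact (hF x' y).mpr (hx' y ((hF x y).mp hy))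

/-- A square relation (|X| = |Y| > 1) with no blank columns that preserves attribute
privacy has every individual uniquely identifiable. -/
theorem square_privacy_implies_identifiable {X Y : Type*} [Fintype X] [Fintype Y]
    (R : Set (X × Y))
    (hcard : Fintype.card X = Fintype.card Y)
    (hgt : 1 < Fintype.card X)
    (hcol : ∀ y : Y, ∃ x : X, (x, y) ∈ R)
    (hpriv : AttrPrivacy R) :
    ∀ x : X, psiR R (rowSet R x) = {x} :=
  square_privacy_implies_identifiable_general R hcard hcol hpriv
end

section
/- Let R be a relation on X × Y with no blank columns. If |Y| > |X| ≥ 1, then R does not preserve attribute privacy: there exists γ with ψ_R(γ) ≠ ∅ or γ = ∅ such that (φ_R ∘ ψ_R)(γ) ≠ γ. -/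
open Finset

section FreeFaces

variable {α : Type*} [DecidableEq α] {𝒜 : Finset (Finset α)} {s : Finset α} {a : α}

def extensions (𝒜 : Finset (Finset α)) (s : Finset α) : Finset α :=
  (𝒜.sup id).filter fun a => a ∉ s ∧ insert a s ∈ 𝒜

def freeFaces (𝒜 : Finset (Finset α)) : Finset (Finset α) :=
  𝒜.filter fun s => #(extensions 𝒜 s) ≤ 1

def freeWeight (𝒜 : Finset (Finset α)) : ℚ :=
  ∑ s ∈ freeFaces 𝒜, 1 / (#s + 1 : ℚ)

lemma mem_extensions : a ∈ extensions 𝒜 s ↔ a ∉ s ∧ insert a s ∈ 𝒜 := by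
  simp only [extensions, mem_filter, and_iff_right_iff_imp, mem_sup, id]
  exact fun h => ⟨_, h.2, mem_insert_self a s⟩

lemma extensions_subset_sdiff : extensions 𝒜 s ⊆ 𝒜.sup id \ s := fun a ha => by
  simp only [extensions, mem_filter] at ha
  exact mem_sdiff.2 ⟨ha.1, ha.2.1⟩

lemma extensions_memberSubfamily (ha : a ∉ s) :
    extensions (𝒜.memberSubfamily a) s = extensions 𝒜 (insert a s) := by
  ext b
  simp only [mem_extensions, mem_memberSubfamily, mem_insert, not_or, insert_comm b a]
  constructor
  · rintro ⟨hb, h, hab, -⟩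
    exact ⟨⟨Ne.symm hab, hb⟩, h⟩
  · rintro ⟨⟨hba, hb⟩, h⟩
    exact ⟨hb, h, Ne.symm hba, ha⟩

lemma memberSubfamily_nonempty (ha : {a} ∈ 𝒜) : (𝒜.memberSubfamily a).Nonempty :=
  ⟨∅, mem_memberSubfamily.2 ⟨by rwa [insert_empty], notMem_empty a⟩⟩

lemma card_memberSubfamily_lt (h : ∅ ∈ 𝒜) : #(𝒜.memberSubfamily a) < #𝒜 := by
  have hsplit := card_memberSubfamily_add_card_nonMemberSubfamily a 𝒜
  have hpos : 0 < #(𝒜.nonMemberSubfamily a) :=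
    card_pos.2 ⟨∅, mem_nonMemberSubfamily.2 ⟨h, notMem_empty a⟩⟩
  omega

lemma sum_filter_mem_freeFaces (𝒜 : Finset (Finset α)) (a : α) :
    ∑ s ∈ (freeFaces 𝒜).filter (a ∈ ·), 1 / (#s : ℚ) = freeWeight (𝒜.memberSubfamily a) := by
  refine sum_nbij' (erase · a) (insert a) ?_ ?_ ?_ ?_ ?_
  · intro s hs
    simp only [freeFaces, mem_filter] at hs ⊢
    rw [mem_memberSubfamily, extensions_memberSubfamily (notMem_erase a s), insert_erase hs.2]
    exact ⟨⟨hs.1.1, notMem_erase a s⟩, hs.1.2⟩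
  · intro t ht
    simp only [freeFaces, mem_filter, mem_memberSubfamily] at ht ⊢
    rw [← extensions_memberSubfamily ht.1.2]
    exact ⟨⟨ht.1.1, ht.2⟩, mem_insert_self a t⟩
  · intro s hs
    exact insert_erase (mem_filter.1 hs).2
  · intro t ht
    exact erase_insert (mem_memberSubfamily.1 (mem_filter.1 ht).1).2
  · intro s hs
    rw [← card_erase_add_one (mem_filter.1 hs).2]
    push_cast
    rfl

lemma card_le_card_filter_nonempty_freeFaces {V : Finset α}
    (hV : ∀ a ∈ V, 1 ≤ freeWeight (𝒜.memberSubfamily a)) :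
    #V ≤ #((freeFaces 𝒜).filter Finset.Nonempty) := by
  have hface : ∀ s ∈ freeFaces 𝒜,
      (#(V.filter (· ∈ s)) / #s : ℚ) ≤ if s.Nonempty then 1 else 0 := by
    intro s _
    split_ifs with hs
    · exact div_le_one_of_le₀ (by exact_mod_cast card_le_card fun a ha => (mem_filter.1 ha).2)
        (Nat.cast_nonneg _)
    · simp [not_nonempty_iff_eq_empty.1 hs]
  have hcount : (#V : ℚ) ≤ #((freeFaces 𝒜).filter Finset.Nonempty) := calc
    (#V : ℚ) = ∑ a ∈ V, 1 := by simp
    _ ≤ ∑ a ∈ V, ∑ s ∈ (freeFaces 𝒜).filter (a ∈ ·), 1 / (#s : ℚ) :=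
      sum_le_sum fun a ha => (sum_filter_mem_freeFaces 𝒜 a).symm ▸ hV a ha
    _ = ∑ s ∈ freeFaces 𝒜, (#(V.filter (· ∈ s)) / #s : ℚ) := by
      simp_rw [sum_filter]
      rw [sum_comm]
      refine sum_congr rfl fun s _ => ?_
      rw [← sum_filter, sum_const, nsmul_eq_mul, mul_one_div]
    _ ≤ ∑ s ∈ freeFaces 𝒜, if s.Nonempty then 1 else 0 := sum_le_sum hface
    _ = #((freeFaces 𝒜).filter Finset.Nonempty) := by
      rw [← sum_filter]
      simp
  exact_mod_cast hcount

lemma one_le_freeWeight_of_sup_mem (h𝒜 : IsLowerSet (𝒜 : Set (Finset α)))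
    (hV : 𝒜.sup id ∈ 𝒜) : 1 ≤ freeWeight 𝒜 := by
  set V := 𝒜.sup id
  have hfree : ∀ t ⊆ V, #(V \ t) ≤ 1 → t ∈ freeFaces 𝒜 := fun t ht hcard =>
    mem_filter.2 ⟨h𝒜 ht hV, (card_le_card extensions_subset_sdiff).trans hcard⟩
  have hnonneg : ∀ t ∈ freeFaces 𝒜, 0 ≤ 1 / (#t + 1 : ℚ) := fun _ _ => by positivity
  rcases V.eq_empty_or_nonempty with hV0 | hVne
  · calc (1 : ℚ) = 1 / (#V + 1) := by simp [hV0]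
      _ ≤ freeWeight 𝒜 := single_le_sum hnonneg (hfree V subset_rfl (by simp))
  · calc (1 : ℚ) = ∑ v ∈ V, 1 / (#(V.erase v) + 1 : ℚ) := by
          rw [sum_congr rfl fun v hv => by rw [← Nat.cast_add_one, card_erase_add_one hv]]
          simp [hVne.card_pos.ne']
      _ = ∑ t ∈ V.image V.erase, 1 / (#t + 1 : ℚ) := (sum_image (f := fun t => 1 / (#t + 1 : ℚ)) V.erase_injOn).symm
      _ ≤ freeWeight 𝒜 := by
        refine sum_le_sum_of_subset_of_nonneg ?_ fun t ht _ => hnonneg t ht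
        refine image_subset_iff.2 fun v hv => hfree _ (erase_subset v V) ?_
        rw [sdiff_erase_self hv, card_singleton]

lemma one_le_freeWeight_of_sup_notMem (hne : 𝒜.Nonempty) (hV : 𝒜.sup id ∉ 𝒜)
    (hlink : ∀ a ∈ 𝒜.sup id, 1 ≤ freeWeight (𝒜.memberSubfamily a)) : 1 ≤ freeWeight 𝒜 := by
  set V := 𝒜.sup id
  have hsmall : ∀ s ∈ 𝒜, #s + 1 ≤ #V := fun s hs =>
    card_lt_card (ssubset_of_subset_of_ne (le_sup (f := id) hs) (by rintro rfl; exact hV hs))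
  have hVpos : (0 : ℚ) < #V := by
    obtain ⟨s, hs⟩ := hne
    exact_mod_cast (Nat.succ_pos _).trans_le (hsmall s hs)
  calc (1 : ℚ) ≤ #((freeFaces 𝒜).filter Finset.Nonempty) / #V := by
        rw [le_div_iff₀ hVpos, one_mul]
        exact_mod_cast card_le_card_filter_nonempty_freeFaces hlink
    _ = ∑ s ∈ (freeFaces 𝒜).filter Finset.Nonempty, 1 / (#V : ℚ) := by
        rw [sum_const, nsmul_eq_mul, div_eq_mul_one_div]
    _ ≤ ∑ s ∈ (freeFaces 𝒜).filter Finset.Nonempty, 1 / (#s + 1 : ℚ) :=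
        sum_le_sum fun s hs => one_div_le_one_div_of_le (by positivity)
          (by exact_mod_cast hsmall s (mem_filter.1 (mem_filter.1 hs).1).1)
    _ ≤ freeWeight 𝒜 :=
        sum_le_sum_of_subset_of_nonneg (filter_subset _ _) fun _ _ _ => by positivity

lemma singleton_mem_of_mem_sup (h𝒜 : IsLowerSet (𝒜 : Set (Finset α))) (ha : a ∈ 𝒜.sup id) :
    {a} ∈ 𝒜 := by
  obtain ⟨s, hs, has⟩ := mem_sup.1 ha
  exact h𝒜 (singleton_subset_iff.2 has) hs

theorem one_le_freeWeight {𝒜 : Finset (Finset α)} (h𝒜 : IsLowerSet (𝒜 : Set (Finset α))) (hne : 𝒜.Nonempty) :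
    1 ≤ freeWeight 𝒜 := by
  by_cases hV : 𝒜.sup id ∈ 𝒜
  · exact one_le_freeWeight_of_sup_mem h𝒜 hV
  refine one_le_freeWeight_of_sup_notMem hne hV fun a ha => ?_
  exact one_le_freeWeight h𝒜.memberSubfamily
    (memberSubfamily_nonempty (singleton_mem_of_mem_sup h𝒜 ha))
termination_by #𝒜
decreasing_by
  obtain ⟨s, hs⟩ := hne
  exact card_memberSubfamily_lt (h𝒜 (empty_subset s) hs)

theorem card_le_card_freeFaces {V : Finset α} (h𝒜 : IsLowerSet (𝒜 : Set (Finset α)))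
    (hV : ∀ a ∈ V, {a} ∈ 𝒜) : #V ≤ #(freeFaces 𝒜) :=
  (card_le_card_filter_nonempty_freeFaces fun a ha =>
    one_le_freeWeight h𝒜.memberSubfamily (memberSubfamily_nonempty (hV a ha))).trans
    (card_filter_le _ _)

end FreeFaces

section Dowker

variable {X Y : Type*} [Fintype Y] (R : Set (X × Y))

open Classical in
noncomputable def dowkerComplex : Finset (Finset Y) :=
  univ.filter fun s => (psiR R s).Nonempty

open Classical in
noncomputable def row (x : X) : Finset Y :=
  univ.filter fun y => (x, y) ∈ R

lemma mem_dowkerComplex {s : Finset Y} : s ∈ dowkerComplex R ↔ (psiR R s).Nonempty := by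
  simp [dowkerComplex]

lemma isLowerSet_dowkerComplex : IsLowerSet (dowkerComplex R : Set (Finset Y)) := by
  intro s t hts hs
  obtain ⟨x, hx⟩ := (mem_dowkerComplex R).1 hs
  exact (mem_dowkerComplex R).2 ⟨x, fun y hy => hx y (hts hy)⟩

lemma singleton_mem_dowkerComplex (hcol : ∀ y : Y, ∃ x : X, (x, y) ∈ R) (y : Y) :
    {y} ∈ dowkerComplex R := by
  obtain ⟨x, hx⟩ := hcol y
  exact (mem_dowkerComplex R).2 ⟨x, fun y' hy' => by rwa [mem_singleton.1 (mem_coe.1 hy')]⟩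

lemma exists_row_eq_of_mem_freeFaces [DecidableEq Y] {s : Finset Y}
    (hs : s ∈ freeFaces (dowkerComplex R)) (hfix : phiR R (psiR R s) = s) :
    ∃ x, row R x = s := by
  obtain ⟨hsD, hext⟩ := mem_filter.1 hs
  have mem_ext : ∀ x ∈ psiR R s, ∀ y ∉ s, (x, y) ∈ R → y ∈ extensions (dowkerComplex R) s :=
    fun x hx y hy hxy => mem_extensions.2 ⟨hy, (mem_dowkerComplex R).2
      ⟨x, fun y' hy' => by
        rcases mem_insert.1 hy' with rfl | hy'
        exacts [hxy, hx y' hy']⟩⟩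
  by_contra! hrow
  have hout : ∀ x ∈ psiR R s, ∃ y ∉ s, (x, y) ∈ R := fun x hx => by
    by_contra! hin
    refine hrow x (Finset.ext fun y => ?_)
    simp only [row, mem_filter, mem_univ, true_and]
    exact ⟨fun hxy => by_contra fun hy => hin y hy hxy, hx y⟩
  obtain ⟨x₀, hx₀⟩ := (mem_dowkerComplex R).1 hsD
  obtain ⟨y₀, hy₀, hx₀y₀⟩ := hout x₀ hx₀
  have hy₀φ : y₀ ∈ phiR R (psiR R s) := fun x hx => by
    obtain ⟨y, hy, hxy⟩ := hout x hx
    rwa [card_le_one.1 hext y₀ (mem_ext x₀ hx₀ y₀ hy₀ hx₀y₀) y (mem_ext x hx y hy hxy)]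
  rw [hfix] at hy₀φ
  exact hy₀ hy₀φ

lemma card_freeFaces_dowkerComplex_le [Fintype X] [DecidableEq Y]
    (hpriv : ∀ s : Finset Y, (psiR R s).Nonempty → phiR R (psiR R s) = s) :
    #(freeFaces (dowkerComplex R)) ≤ Fintype.card X :=
  calc #(freeFaces (dowkerComplex R)) ≤ #(univ.image (row R)) := card_le_card fun s hs => by
        obtain ⟨x, hx⟩ := exists_row_eq_of_mem_freeFaces R hs
          (hpriv s ((mem_dowkerComplex R).1 (mem_filter.1 hs).1))
        exact mem_image.2 ⟨x, mem_univ x, hx⟩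
    _ ≤ Fintype.card X := card_image_le

end Dowker

theorem too_many_attributes_general {X Y : Type*} [Fintype X] [Fintype Y]
    (R : Set (X × Y))
    (hcol : ∀ y : Y, ∃ x : X, (x, y) ∈ R)
    (hlt : Fintype.card X < Fintype.card Y) :
    ∃ γ : Set Y, ((psiR R γ).Nonempty ∨ γ = ∅) ∧ phiR R (psiR R γ) ≠ γ := by
  classical
  by_contra! hpriv
  have hfree_le := card_freeFaces_dowkerComplex_le R fun s hs => hpriv s (Or.inl hs)
  have hle_free := card_le_card_freeFaces (V := univ) (isLowerSet_dowkerComplex R)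
    fun y _ => singleton_mem_dowkerComplex R hcol y
  rw [card_univ] at hle_free
  omega

/-- A relation with no blank columns and more attributes than individuals cannot
preserve attribute privacy. -/
theorem too_many_attributes {X Y : Type*} [Fintype X] [Fintype Y]
    (R : Set (X × Y))
    (hcol : ∀ y : Y, ∃ x : X, (x, y) ∈ R)
    (hX : 1 ≤ Fintype.card X)
    (hlt : Fintype.card X < Fintype.card Y) :
    ∃ γ : Set Y, ((psiR R γ).Nonempty ∨ γ = ∅) ∧ phiR R (psiR R γ) ≠ γ :=
  too_many_attributes_general R hcol hlt
end

section
/- Let R be a relation on X × Y with |X| > 1, and let x ∈ X be uniquely identifiable via R (ψ_R(Y_x) = {x}). Let X̃ = ⋃_{y∈Y_x} (X_y \ {x}) and let Q = R restricted to X̃ × Y_x. Then R preserves attribute privacy for x (i.e., (φ_R∘ψ_R)(γ) = γ for all γ ⊆ Y_x) if and only if Φ_Q equals the boundary complex ∂(Y_x), i.e., the simplices of Φ_Q are exactly the proper subsets of Y_x. -/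
/-- The individuals of the link of x: X̃ = ⋃_{y ∈ Y_x} (X_y \ {x}). -/
def linkIndiv {X Y : Type*} (R : Set (X × Y)) (x : X) : Set X :=
  {x' | x' ≠ x ∧ ∃ y ∈ rowSet R x, (x', y) ∈ R}

/-- The Dowker attribute complex of the relation Q modeling Lk(Ψ_R, x):
Q is R restricted to X̃ × Y_x, with the convention Φ_Q = {∅} when X̃ = ∅. -/
def linkPhi {X Y : Type*} (R : Set (X × Y)) (x : X) : Set (Set Y) :=
  {γ | γ ⊆ rowSet R x ∧
    (γ = ∅ ∨ ∃ x' ∈ linkIndiv R x, ∀ y ∈ γ, (x', y) ∈ R)}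

/- Write `Y_x` for `rowSet R x`. Both sides say that every proper face `γ ⊂ Y_x` is shared by an
individual `x' ≠ x`. For the link complex this is its definition, once we note that `Y_x` itself
is not shared (that is unique identifiability) and that `∅` is shared because `|X| > 1`. For
privacy, a witness `x'` for `γ` missing some `y ∈ Y_x \ γ` keeps `y` out of the closure of `γ`;
conversely a sharer of `Y_x \ {y}` cannot have `y`, since it would then share all of `Y_x`. -/

section

variable {X Y : Type*} (R : Set (X × Y))

theorem psiR_anti {γ δ : Set Y} (h : γ ⊆ δ) : psiR R δ ⊆ psiR R γ :=
  fun _ hx' y hy => hx' y (h hy)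

theorem mem_linkPhi_iff [Nontrivial X] {x : X} {γ : Set Y} :
    γ ∈ linkPhi R x ↔ γ ⊆ rowSet R x ∧ ∃ x' ∈ psiR R γ, x' ≠ x := by
  refine and_congr_right fun hγ => ⟨?_, ?_⟩
  · rintro (rfl | ⟨x', ⟨hx'x, -⟩, hx'γ⟩)
    · obtain ⟨x', hx'x⟩ := exists_ne x
      exact ⟨x', fun _ h => h.elim, hx'x⟩
    · exact ⟨x', hx'γ, hx'x⟩
  · rintro ⟨x', hx'γ, hx'x⟩
    rcases γ.eq_empty_or_nonempty with rfl | ⟨y, hy⟩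
    · exact Or.inl rfl
    · exact Or.inr ⟨x', ⟨hx'x, y, hγ hy, hx'γ y hy⟩, hx'γ⟩

variable {R} {x : X}

theorem linkPhi_eq_ssubsets_iff [Nontrivial X] (hid : psiR R (rowSet R x) = {x}) :
    linkPhi R x = {γ | γ ⊂ rowSet R x} ↔ ∀ γ ⊂ rowSet R x, ∃ x' ∈ psiR R γ, x' ≠ x := by
  have not_shared : ¬∃ x' ∈ psiR R (rowSet R x), x' ≠ x := by
    rw [hid]
    rintro ⟨x', rfl, hne⟩
    exact hne rfl
  constructor
  · intro h γ hγ
    have hmem : γ ∈ linkPhi R x := h ▸ hγ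
    exact ((mem_linkPhi_iff R).1 hmem).2
  · intro h
    ext γ
    rw [mem_linkPhi_iff]
    refine ⟨fun ⟨hγ, hshared⟩ => hγ.ssubset_of_ne ?_, fun hγ => ⟨hγ.subset, h γ hγ⟩⟩
    rintro rfl
    exact not_shared hshared

theorem attributePrivacy_iff (hid : psiR R (rowSet R x) = {x}) :
    (∀ γ ⊆ rowSet R x, phiR R (psiR R γ) = γ) ↔ ∀ γ ⊂ rowSet R x, ∃ x' ∈ psiR R γ, x' ≠ x := by
  constructor
  · intro hpriv γ hγ
    obtain ⟨y, hyx, hyγ⟩ := Set.exists_of_ssubset hγ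
    rw [← hpriv γ hγ.subset] at hyγ
    simp only [phiR, Set.mem_ofPred_eq, not_forall] at hyγ
    obtain ⟨x', hx'γ, hx'y⟩ := hyγ
    exact ⟨x', hx'γ, by rintro rfl; exact hx'y hyx⟩
  · intro hshared γ hγ
    refine Set.Subset.antisymm ?_ (subset_phiR_psiR R γ)
    intro y hy
    have hyx : y ∈ rowSet R x := hy x hγ
    by_contra hyγ
    obtain ⟨x', hx'τ, hx'x⟩ := hshared _ (Set.sdiff_singleton_ssubset.mpr hyx)
    have hγτ : γ ⊆ rowSet R x \ {y} := fun z hz => ⟨hγ hz, by rintro rfl; exact hyγ hz⟩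
    have hx'y : (x', y) ∈ R := hy x' (psiR_anti R hγτ hx'τ)
    have hx'Yx : x' ∈ psiR R (rowSet R x) := fun z hz => by
      by_cases hzy : z = y
      · exact hzy ▸ hx'y
      · exact hx'τ z ⟨hz, hzy⟩
    rw [hid] at hx'Yx
    exact hx'x hx'Yx

end

theorem individual_privacy_iff_boundary_general {X Y : Type*} [Fintype X]
    (R : Set (X × Y)) (hX : 1 < Fintype.card X) (x : X)
    (hid : psiR R (rowSet R x) = {x}) :
    (∀ γ : Set Y, γ ⊆ rowSet R x → phiR R (psiR R γ) = γ) ↔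
    linkPhi R x = {γ : Set Y | γ ⊂ rowSet R x} := by
  have := Fintype.one_lt_card_iff_nontrivial.mp hX
  rw [attributePrivacy_iff hid, linkPhi_eq_ssubsets_iff hid]

/-- Individual attribute privacy characterization: a uniquely identifiable
individual x has full attribute privacy iff Φ_Q is the boundary complex
∂(Y_x), i.e. the simplices of Φ_Q are exactly the proper subsets of Y_x. -/
theorem individual_privacy_iff_boundary {X Y : Type*} [Fintype X] [Fintype Y]
    (R : Set (X × Y)) (hX : 1 < Fintype.card X) (x : X)
    (hYx : (rowSet R x).Nonempty)
    (hid : psiR R (rowSet R x) = {x}) :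
    (∀ γ : Set Y, γ ⊆ rowSet R x → phiR R (psiR R γ) = γ) ↔
    linkPhi R x = {γ : Set Y | γ ⊂ rowSet R x} :=
  individual_privacy_iff_boundary_general R hX x hid
end

section
/- Let R be a relation on nonempty finite sets X and Y, and suppose {(σ_k, γ_k) < ⋯ < (σ_1, γ_1) < (σ_0, γ_0)} with k ≥ 1 is a maximal chain in the Galois lattice P⁺_R (so σ_i = ψ_R(γ_i), γ_i = φ_R(σ_i), σ_i ⊊ σ_{i-1}, γ_i ⊋ γ_{i-1}, σ_0 = X, γ_k = Y). Choose y_i ∈ γ_i \ γ_{i-1} for each i = 1,…,k. Then (φ_R ∘ ψ_R)({y_1,…,y_i}) = γ_i for each i = 0,1,…,k; in particular y_i ∉ (φ_R∘ψ_R)({y_1,…,y_{i-1}}) for all i, so y_1,…,y_k is an informative attribute release sequence for R. -/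
/-!
Write `S_i = {y_1, …, y_i}`. Induction on `i` shows `ψ(S_i) = σ_i`: the extent
`ψ(S_{i+1}) = σ_i ∩ ψ{y_{i+1}}` is closed and lies between `σ_{i+1}` and `σ_i`, so by maximality of
the chain it is one of the two; it cannot be `σ_i`, since `y_{i+1} ∉ γ_i = φ(σ_i)`.
-/

open Set

theorem psiR_insert_eq_of_maximal {X Y : Type*} (R : Set (X × Y)) {S : Set Y} {y : Y}
    {lo hi : Set X} (hlo : lo ⊆ hi)
    (hmax : ∀ τ : Set X, τ = psiR R (phiR R τ) → lo ⊆ τ → τ ⊆ hi → τ = lo ∨ τ = hi)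
    (hS : psiR R S = hi) (hy : y ∈ phiR R lo \ phiR R hi) :
    psiR R (insert y S) = lo := by
  -- `psiR R` and `phiR R` are definitionally `lowerPolar` and `upperPolar` of `fun x y => (x, y) ∈ R`.
  have hinsert : psiR R (insert y S) = hi ∩ psiR R {y} := by
    rw [insert_eq, union_comm, ← hS]
    exact lowerPolar_union (r := fun x y => (x, y) ∈ R) S {y}
  have hclosed : psiR R (insert y S) = psiR R (phiR R (psiR R (insert y S))) :=
    (lowerPolar_upperPolar_lowerPolar (r := fun x y => (x, y) ∈ R) _).symm
  have hlo_sub : lo ⊆ psiR R (insert y S) :=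
    hinsert ▸ subset_inter hlo fun x hx => (mem_lowerPolar_singleton _).2 (hy.1 x hx)
  rcases hmax _ hclosed hlo_sub (hinsert ▸ inter_subset_left) with h | h
  · exact h
  · refine absurd ?_ hy.2
    rw [← h]
    exact subset_upperPolar_lowerPolar (r := fun x y => (x, y) ∈ R) _ (mem_insert y S)

theorem psiR_image_eq_of_maximal_chain {X Y : Type*} (R : Set (X × Y)) (k : ℕ)
    (σ : ℕ → Set X) (γ : ℕ → Set Y) (hγ : ∀ i ≤ k, γ i = phiR R (σ i)) (htop : σ 0 = univ)
    (hchain : ∀ i < k, σ (i + 1) ⊆ σ i)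
    (hmaximal : ∀ i < k, ∀ τ : Set X, τ = psiR R (phiR R τ) →
        σ (i + 1) ⊆ τ → τ ⊆ σ i → τ = σ (i + 1) ∨ τ = σ i)
    (y : ℕ → Y) (hy : ∀ i < k, y (i + 1) ∈ γ (i + 1) \ γ i) :
    ∀ i ≤ k, psiR R (y '' {j | 1 ≤ j ∧ j ≤ i}) = σ i := by
  intro i
  induction i with
  | zero =>
    intro _
    simp [htop, psiR]
  | succ n ih =>
    intro (hn : n < k)
    have hS : y '' {j | 1 ≤ j ∧ j ≤ n + 1} = insert (y (n + 1)) (y '' {j | 1 ≤ j ∧ j ≤ n}) := by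
      rw [← image_insert_eq]
      congr 1
      ext j
      simp only [mem_ofPred_eq, mem_insert_iff]
      omega
    have hyn := hy n hn
    rw [hγ _ hn, hγ n hn.le] at hyn
    rw [hS]
    exact psiR_insert_eq_of_maximal R (hchain n hn) (hmaximal n hn) (ih hn.le) hyn

theorem informative_from_maximal_chain_general {X Y : Type*} (R : Set (X × Y)) (k : ℕ)
    (σ : ℕ → Set X) (γ : ℕ → Set Y)
    (hclosed : ∀ i ≤ k, σ i = psiR R (γ i) ∧ γ i = phiR R (σ i))
    (htop : σ 0 = Set.univ)
    (hchain : ∀ i, 1 ≤ i → i ≤ k → σ i ⊂ σ (i - 1))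
    (hmaximal : ∀ i, 1 ≤ i → i ≤ k → ∀ τ : Set X, τ = psiR R (phiR R τ) →
        σ i ⊆ τ → τ ⊆ σ (i - 1) → τ = σ i ∨ τ = σ (i - 1))
    (y : ℕ → Y) (hy : ∀ i, 1 ≤ i → i ≤ k → y i ∈ γ i \ γ (i - 1)) :
    (∀ i ≤ k, phiR R (psiR R (y '' {j | 1 ≤ j ∧ j ≤ i})) = γ i) ∧
    (∀ i, 1 ≤ i → i ≤ k →
      y i ∉ phiR R (psiR R (y '' {j | 1 ≤ j ∧ j ≤ i - 1}))) := by
  have hextent := psiR_image_eq_of_maximal_chain R k σ γ (fun i hi => (hclosed i hi).2) htop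
    (fun i hi => (hchain (i + 1) (by omega) hi).subset) (fun i hi => hmaximal (i + 1) (by omega) hi)
    y (fun i hi => hy (i + 1) (by omega) hi)
  have hclosure : ∀ i ≤ k, phiR R (psiR R (y '' {j | 1 ≤ j ∧ j ≤ i})) = γ i := fun i hi => by
    rw [hextent i hi, (hclosed i hi).2]
  refine ⟨hclosure, fun i hi hik => ?_⟩
  rw [hclosure (i - 1) (by omega)]
  exact (hy i hi hik).2

/-- Informative attributes from maximal chains: given a maximal chain
(σ_k, γ_k) < ⋯ < (σ_0, γ_0) in the Galois lattice P⁺_R and choices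
y_i ∈ γ_i \ γ_{i-1}, the closure of {y_1,…,y_i} is exactly γ_i for each i;
in particular y_1,…,y_k is an informative attribute release sequence. -/
theorem informative_from_maximal_chain {X Y : Type*} [Fintype X] [Fintype Y]
    [Nonempty X] [Nonempty Y] (R : Set (X × Y)) (k : ℕ) (hk : 1 ≤ k)
    (σ : ℕ → Set X) (γ : ℕ → Set Y)
    (hclosed : ∀ i ≤ k, σ i = psiR R (γ i) ∧ γ i = phiR R (σ i))
    (htop : σ 0 = Set.univ) (hbot : γ k = Set.univ)
    (hchain : ∀ i, 1 ≤ i → i ≤ k → σ i ⊂ σ (i - 1))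
    (hmaximal : ∀ i, 1 ≤ i → i ≤ k → ∀ τ : Set X, τ = psiR R (phiR R τ) →
        σ i ⊆ τ → τ ⊆ σ (i - 1) → τ = σ i ∨ τ = σ (i - 1))
    (y : ℕ → Y) (hy : ∀ i, 1 ≤ i → i ≤ k → y i ∈ γ i \ γ (i - 1)) :
    (∀ i ≤ k, phiR R (psiR R (y '' {j | 1 ≤ j ∧ j ≤ i})) = γ i) ∧
    (∀ i, 1 ≤ i → i ≤ k →
      y i ∉ phiR R (psiR R (y '' {j | 1 ≤ j ∧ j ≤ i - 1}))) :=
  informative_from_maximal_chain_general R k σ γ hclosed htop hchain hmaximal y hy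
end
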